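/- Let p > 5 and ω > 0, and let (α,β) satisfy α > 0, 2α−β ≥ 0 and 2α+β ≥ 0. Then l^{α,β}_ω = j^{α,β}_ω, where l^{α,β}_ω = inf{ S_{ω,0}(φ) : φ ∈ H¹(ℝ), φ ≠ 0, K^{α,β}_{ω,0}(φ) = 0 } and j^{α,β}_ω = inf{ J^{α,β}_{ω,0}(φ) : φ ∈ H¹(ℝ), φ ≠ 0, K^{α,β}_{ω,0}(φ) ≤ 0 }. -/

import Mathlib

open MeasureTheory Real Filter Topology

/-- `φ : ℝ → ℂ` lies in `H¹(ℝ)`: `φ ∈ L²(ℝ)` together with a weak derivative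
`dx ∈ L²(ℝ)` such that `φ x = φ 0 + ∫₀ˣ dx (t) dt` for all `x`. -/
structure H1 where
  toFun : ℝ → ℂ
  dx : ℝ → ℂ
  memL2 : MemLp toFun 2 (volume : Measure ℝ)
  dx_memL2 : MemLp dx 2 (volume : Measure ℝ)
  eq_int : ∀ x : ℝ, toFun x = toFun 0 + ∫ t in (0:ℝ)..x, dx t

/-- `‖∂ₓφ‖²_{L²}` -/
noncomputable def gradSq (φ : H1) : ℝ := ∫ x : ℝ, ‖φ.dx x‖ ^ 2

/-- `‖φ‖²_{L²}` -/
noncomputable def massSq (φ : H1) : ℝ := ∫ x : ℝ, ‖φ.toFun x‖ ^ 2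

/-- `‖φ‖^{p+1}_{L^{p+1}}` -/
noncomputable def lpPow (p : ℝ) (φ : H1) : ℝ := ∫ x : ℝ, ‖φ.toFun x‖ ^ (p + 1)

/-- The action `S_{ω,μ}(φ) = (1/4)‖∂ₓφ‖²_{L²} − (μ/2)|φ(0)|² + (ω/2)‖φ‖²_{L²}
− (1/(p+1))‖φ‖^{p+1}_{L^{p+1}}`. -/
noncomputable def Sfun (p ω μ : ℝ) (φ : H1) : ℝ :=
  (1/4) * gradSq φ - (μ/2) * ‖φ.toFun 0‖ ^ 2 + (ω/2) * massSq φ - (1/(p+1)) * lpPow p φ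

/-- The virial functional `P_μ(φ) = (1/2)‖∂ₓφ‖²_{L²} − (μ/2)|φ(0)|²
− ((p−1)/(2(p+1)))‖φ‖^{p+1}_{L^{p+1}}`. -/
noncomputable def Pfun (p μ : ℝ) (φ : H1) : ℝ :=
  (1/2) * gradSq φ - (μ/2) * ‖φ.toFun 0‖ ^ 2 - ((p-1)/(2*(p+1))) * lpPow p φ

/-- The Nehari functional `I_{ω,γ}(φ) = (1/2)‖∂ₓφ‖²_{L²} − γ|φ(0)|² + ω‖φ‖²_{L²}
− ‖φ‖^{p+1}_{L^{p+1}}`. -/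
noncomputable def Ifun (p ω γ : ℝ) (φ : H1) : ℝ :=
  (1/2) * gradSq φ - γ * ‖φ.toFun 0‖ ^ 2 + ω * massSq φ - lpPow p φ

/-- `K^{α,β}_{ω,γ}`. -/
noncomputable def Kfun (p ω γ α β : ℝ) (φ : H1) : ℝ :=
  ((2*α-β)/4) * gradSq φ + (ω*(2*α+β)/2) * massSq φ - γ*α*‖φ.toFun 0‖ ^ 2
    - (((p+1)*α+β)/(p+1)) * lpPow p φ

/-- `J^{α,β}_{ω,γ}(φ) = S_{ω,γ}(φ) − K^{α,β}_{ω,γ}(φ)/μ̄` with `μ̄ = max(2α−β, 2α+β)`. -/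
noncomputable def Jfun (p ω γ α β : ℝ) (φ : H1) : ℝ :=
  Sfun p ω γ φ - Kfun p ω γ α β φ / max (2*α-β) (2*α+β)

/-- The mass `M(φ) = (1/2)‖φ‖²_{L²}`. -/
noncomputable def Mfun (φ : H1) : ℝ := (1/2) * massSq φ

/-- The energy `E_μ(φ) = (1/4)‖∂ₓφ‖²_{L²} − (μ/2)|φ(0)|² − (1/(p+1))‖φ‖^{p+1}_{L^{p+1}}`. -/
noncomputable def Efun (p μ : ℝ) (φ : H1) : ℝ :=
  (1/4) * gradSq φ - (μ/2) * ‖φ.toFun 0‖ ^ 2 - (1/(p+1)) * lpPow p φ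

/-- `n_ω`: infimum of `S_{ω,γ}` over nonzero `H¹(ℝ)` functions with `P_γ = 0`. -/
noncomputable def nOmega (p γ ω : ℝ) : ℝ :=
  sInf {s : ℝ | ∃ φ : H1, φ.toFun ≠ 0 ∧ Pfun p γ φ = 0 ∧ Sfun p ω γ φ = s}

/-- `r_ω`: infimum of `S_{ω,γ}` over nonzero even `H¹(ℝ)` functions with `P_γ = 0`. -/
noncomputable def rOmega (p γ ω : ℝ) : ℝ :=
  sInf {s : ℝ | ∃ φ : H1, φ.toFun ≠ 0 ∧ (∀ x, φ.toFun (-x) = φ.toFun x) ∧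
    Pfun p γ φ = 0 ∧ Sfun p ω γ φ = s}

/-- `l_ω`: infimum of `S_{ω,0}` over nonzero `H¹(ℝ)` functions with `P_0 = 0`. -/
noncomputable def lOmega (p ω : ℝ) : ℝ :=
  sInf {s : ℝ | ∃ φ : H1, φ.toFun ≠ 0 ∧ Pfun p 0 φ = 0 ∧ Sfun p ω 0 φ = s}

/-- The inverse hyperbolic tangent. -/
noncomputable def artanh (x : ℝ) : ℝ := (1/2) * Real.log ((1+x)/(1-x))

/-- The standing-wave profile
`Q_{ω,γ}(x) = ( ((p+1)ω/2)·sech²( ((p−1)√ω/√2)|x| + artanh(γ/√(2ω)) ) )^{1/(p−1)}`. -/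
noncomputable def Qsol (p γ ω : ℝ) : ℝ → ℝ := fun x =>
  (((p+1)*ω/2) *
    (1 / Real.cosh (((p-1)*Real.sqrt ω/Real.sqrt 2) * |x| + _root_.artanh (γ / Real.sqrt (2*ω)))) ^ 2)
  ^ (1/(p-1))

/-- The free ground state `Q_{1,0}(x) = ( ((p+1)/2)·sech²( ((p−1)/√2)x ) )^{1/(p−1)}`. -/
noncomputable def Qfree (p : ℝ) : ℝ → ℝ := fun x =>
  (((p+1)/2) * (1 / Real.cosh (((p-1)/Real.sqrt 2) * x)) ^ 2) ^ (1/(p-1))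

/-- `‖φ‖²_𝓗 = (1/4)‖∂ₓφ‖²_{L²} + (ω/2)‖φ‖²_{L²} − (γ/2)|φ(0)|²`. -/
noncomputable def HnormSq (ω γ : ℝ) (φ : H1) : ℝ :=
  (1/4) * gradSq φ + (ω/2) * massSq φ - (γ/2) * ‖φ.toFun 0‖ ^ 2

/-!
Since `J = S - K / μ̄`, the two functionals agree on `{K = 0}`, so `j ≤ l`. Conversely, `J` is a
combination of `‖∂ₓφ‖²`, `‖φ‖²` and `‖φ‖^{p+1}` with nonnegative coefficients (this is where
`p ≥ 5` enters), so it does not increase along `t ↦ tφ` for `t ∈ [0, 1]`. If `K(φ) ≤ 0`, the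
quadratic part of `K(tφ)` scales like `t²` and its nonlinear part like `t^{p+1}`, so some
`t ∈ (0, 1]` gives `K(tφ) = 0`, and then `S(tφ) = J(tφ) ≤ J(φ)`.
-/

lemma MeasureTheory.MemLp.integral_norm_sq_eq_zero_iff {α E : Type*} [MeasurableSpace α]
    {μ : Measure α} [NormedAddCommGroup E] {f : α → E} (hf : MemLp f 2 μ) :
    ∫ x, ‖f x‖ ^ 2 ∂μ = 0 ↔ f =ᵐ[μ] 0 := by
  rw [integral_eq_zero_iff_of_nonneg (fun _ => by positivity) (hf.integrable_norm_pow two_ne_zero)]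
  simp [Filter.EventuallyEq]

lemma MeasureTheory.MemLp.intervalIntegrable {E : Type*} [NormedAddCommGroup E]
    {μ : Measure ℝ} [IsLocallyFiniteMeasure μ] {q : ENNReal} {f : ℝ → E} (hf : MemLp f q μ)
    (hq : 1 ≤ q) (a b : ℝ) : IntervalIntegrable f μ a b :=
  ((hf.locallyIntegrable hq).integrableOn_isCompact isCompact_uIcc).intervalIntegrable

namespace H1

lemma continuous (φ : H1) : Continuous φ.toFun := by
  rw [show φ.toFun = fun x => φ.toFun 0 + ∫ t in (0:ℝ)..x, φ.dx t from funext φ.eq_int]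
  exact continuous_const.add
    (intervalIntegral.continuous_primitive (φ.dx_memL2.intervalIntegrable one_le_two) 0)

lemma eq_zero_of_dx_ae_eq_zero (φ : H1) (h : φ.dx =ᵐ[volume] 0) : φ.toFun = 0 := by
  have hconst : φ.toFun = fun _ => φ.toFun 0 := by
    funext x
    rw [φ.eq_int x, intervalIntegral.integral_congr_ae (h.mono fun _ ht _ => ht)]
    simp
  have hmem := φ.memL2
  rw [hconst, memLp_const_iff two_ne_zero ENNReal.ofNat_ne_top] at hmem
  rcases hmem with h0 | hfin
  · rw [hconst, h0]; rfl
  · simp at hfin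

noncomputable def scale (c : ℝ) (φ : H1) : H1 where
  toFun x := c * φ.toFun x
  dx x := c * φ.dx x
  memL2 := φ.memL2.const_mul (c : ℂ)
  dx_memL2 := φ.dx_memL2.const_mul (c : ℂ)
  eq_int x := by rw [intervalIntegral.integral_const_mul, φ.eq_int x]; ring

lemma scale_toFun_ne_zero {c : ℝ} (hc : c ≠ 0) {φ : H1} (hφ : φ.toFun ≠ 0) :
    (φ.scale c).toFun ≠ 0 := by
  intro h
  apply hφ
  funext x
  simpa [scale, hc] using congrFun h x

end H1

open H1

lemma gradSq_nonneg (φ : H1) : 0 ≤ gradSq φ :=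
  integral_nonneg fun _ => by positivity

lemma massSq_nonneg (φ : H1) : 0 ≤ massSq φ :=
  integral_nonneg fun _ => by positivity

lemma lpPow_nonneg (p : ℝ) (φ : H1) : 0 ≤ lpPow p φ :=
  integral_nonneg fun _ => by positivity

lemma massSq_pos {φ : H1} (hφ : φ.toFun ≠ 0) : 0 < massSq φ := by
  refine (massSq_nonneg φ).lt_of_ne fun h => hφ ?_
  rw [eq_comm, massSq, φ.memL2.integral_norm_sq_eq_zero_iff] at h
  exact (φ.continuous.ae_eq_iff_eq volume continuous_const).1 h

lemma gradSq_pos {φ : H1} (hφ : φ.toFun ≠ 0) : 0 < gradSq φ := by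
  refine (gradSq_nonneg φ).lt_of_ne fun h => hφ ?_
  rw [eq_comm, gradSq, φ.dx_memL2.integral_norm_sq_eq_zero_iff] at h
  exact φ.eq_zero_of_dx_ae_eq_zero h

lemma gradSq_scale {c : ℝ} (hc : 0 ≤ c) (φ : H1) : gradSq (φ.scale c) = c ^ 2 * gradSq φ := by
  simp only [gradSq, scale, norm_mul, Complex.norm_real, Real.norm_eq_abs, abs_of_nonneg hc,
    mul_pow, integral_const_mul]

lemma massSq_scale {c : ℝ} (hc : 0 ≤ c) (φ : H1) : massSq (φ.scale c) = c ^ 2 * massSq φ := by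
  simp only [massSq, scale, norm_mul, Complex.norm_real, Real.norm_eq_abs, abs_of_nonneg hc,
    mul_pow, integral_const_mul]

lemma lpPow_scale (p : ℝ) {c : ℝ} (hc : 0 ≤ c) (φ : H1) :
    lpPow p (φ.scale c) = c ^ (p + 1) * lpPow p φ := by
  simp only [lpPow, scale, norm_mul, Complex.norm_real, Real.norm_eq_abs, abs_of_nonneg hc,
    Real.mul_rpow hc (norm_nonneg _), integral_const_mul]

section Functionals

variable {p ω α β : ℝ}

noncomputable def Kquad (ω α β : ℝ) (φ : H1) : ℝ :=
  ((2*α-β)/4) * gradSq φ + (ω*(2*α+β)/2) * massSq φ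

lemma Kfun_zero_eq (p ω α β : ℝ) (φ : H1) :
    Kfun p ω 0 α β φ = Kquad ω α β φ - (((p+1)*α+β)/(p+1)) * lpPow p φ := by
  rw [Kfun, Kquad]; ring

lemma Kquad_scale {c : ℝ} (hc : 0 ≤ c) (φ : H1) :
    Kquad ω α β (φ.scale c) = c ^ 2 * Kquad ω α β φ := by
  rw [Kquad, Kquad, gradSq_scale hc, massSq_scale hc]; ring

lemma Kquad_pos (hω : 0 < ω) (hα : 0 < α) (hβ1 : 0 ≤ 2*α - β) (hβ2 : 0 ≤ 2*α + β)
    {φ : H1} (hφ : φ.toFun ≠ 0) : 0 < Kquad ω α β φ := by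
  have hG := gradSq_pos hφ
  have hM := massSq_pos hφ
  rw [Kquad]
  rcases hβ2.lt_or_eq with hβ | hβ
  · have := mul_nonneg hβ1 hG.le
    have := mul_pos (mul_pos hω hβ) hM
    linarith
  · rw [← hβ]
    nlinarith

lemma exists_scale_Kfun_eq_zero (hp : 1 < p) (hω : 0 < ω) (hα : 0 < α)
    (hβ1 : 0 ≤ 2*α - β) (hβ2 : 0 ≤ 2*α + β) {φ : H1} (hφ : φ.toFun ≠ 0)
    (hK : Kfun p ω 0 α β φ ≤ 0) :
    ∃ t : ℝ, 0 < t ∧ t ≤ 1 ∧ Kfun p ω 0 α β (φ.scale t) = 0 := by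
  set A := Kquad ω α β φ
  set c := ((p+1)*α+β)/(p+1)
  set L := lpPow p φ
  have hA : 0 < A := Kquad_pos hω hα hβ1 hβ2 hφ
  have hAcL : A ≤ c * L := by rw [Kfun_zero_eq] at hK; linarith
  have hx : 0 < A / (c * L) := div_pos hA (hA.trans_le hAcL)
  -- `t^{p-1} = A / (c L)` balances `t² A` against `t^{p+1} c L`
  set t := (A / (c * L)) ^ (p - 1)⁻¹
  have ht : t ^ (p - 1) = A / (c * L) := Real.rpow_inv_rpow hx.le (by linarith)
  have ht0 : 0 < t := Real.rpow_pos_of_pos hx _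
  have htp : t ^ (p + 1) = t ^ 2 * (A / (c * L)) := by
    rw [show p + 1 = 2 + (p - 1) by ring, Real.rpow_add ht0, ht, Real.rpow_two]
  refine ⟨t, ht0, Real.rpow_le_one hx.le ((div_le_one (hA.trans_le hAcL)).2 hAcL)
    (inv_nonneg.2 (by linarith)), ?_⟩
  rw [Kfun_zero_eq, Kquad_scale ht0.le, lpPow_scale p ht0.le, htp]
  change t ^ 2 * A - c * (t ^ 2 * (A / (c * L)) * L) = 0
  obtain ⟨hc, hL⟩ := mul_ne_zero_iff.1 (hA.trans_le hAcL).ne'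
  field_simp
  ring

lemma Jfun_eq_nonneg_combination (hp : 5 ≤ p) (hω : 0 ≤ ω) (hα : 0 < α) (hβ : 0 ≤ 2*α + β) :
    ∃ a b d : ℝ, 0 ≤ a ∧ 0 ≤ b ∧ 0 ≤ d ∧
      ∀ φ, Jfun p ω 0 α β φ = a * gradSq φ + b * massSq φ + d * lpPow p φ := by
  obtain ⟨m, hm_def⟩ : ∃ m, max (2*α-β) (2*α+β) = m := ⟨_, rfl⟩
  have hm1 : 2*α-β ≤ m := hm_def ▸ le_max_left _ _
  have hm2 : 2*α+β ≤ m := hm_def ▸ le_max_right _ _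
  have hm : 0 < m := by linarith
  have hmp : m ≤ (p+1)*α+β := hm_def ▸ max_le (by nlinarith) (by nlinarith)
  refine ⟨(m - (2*α-β)) / (4*m), ω * (m - (2*α+β)) / (2*m), ((p+1)*α+β - m) / ((p+1)*m),
    by positivity, ?_, by positivity, fun φ => ?_⟩
  · exact div_nonneg (mul_nonneg hω (by linarith)) (by positivity)
  · have : p + 1 ≠ 0 := by linarith
    rw [Jfun, Sfun, Kfun, hm_def]
    field_simp
    ring

lemma Jfun_scale_le (hp : 5 ≤ p) (hω : 0 ≤ ω) (hα : 0 < α) (hβ : 0 ≤ 2*α + β) {t : ℝ}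
    (ht0 : 0 ≤ t) (ht1 : t ≤ 1) (φ : H1) : Jfun p ω 0 α β (φ.scale t) ≤ Jfun p ω 0 α β φ := by
  obtain ⟨a, b, d, ha, hb, hd, hJ⟩ := Jfun_eq_nonneg_combination hp hω hα hβ
  have ht2 : t ^ 2 ≤ 1 := pow_le_one₀ ht0 ht1
  have htp : t ^ (p + 1) ≤ 1 := Real.rpow_le_one ht0 ht1 (by linarith)
  rw [hJ, hJ, gradSq_scale ht0, massSq_scale ht0, lpPow_scale p ht0]
  gcongr ?_ + ?_ + ?_
  · exact mul_le_mul_of_nonneg_left (mul_le_of_le_one_left (gradSq_nonneg φ) ht2) ha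
  · exact mul_le_mul_of_nonneg_left (mul_le_of_le_one_left (massSq_nonneg φ) ht2) hb
  · exact mul_le_mul_of_nonneg_left (mul_le_of_le_one_left (lpPow_nonneg p φ) htp) hd

lemma Jfun_eq_Sfun_of_Kfun_eq_zero {φ : H1} (hK : Kfun p ω 0 α β φ = 0) :
    Jfun p ω 0 α β φ = Sfun p ω 0 φ := by
  simp [Jfun, hK]

lemma exists_Kfun_eq_zero_Sfun_le_Jfun (hp : 5 ≤ p) (hω : 0 < ω) (hα : 0 < α)
    (hβ1 : 0 ≤ 2*α - β) (hβ2 : 0 ≤ 2*α + β) {φ : H1} (hφ : φ.toFun ≠ 0)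
    (hK : Kfun p ω 0 α β φ ≤ 0) :
    ∃ ψ : H1, ψ.toFun ≠ 0 ∧ Kfun p ω 0 α β ψ = 0 ∧ Sfun p ω 0 ψ ≤ Jfun p ω 0 α β φ := by
  obtain ⟨t, ht0, ht1, hKt⟩ := exists_scale_Kfun_eq_zero (by linarith) hω hα hβ1 hβ2 hφ hK
  refine ⟨φ.scale t, scale_toFun_ne_zero ht0.ne' hφ, hKt, ?_⟩
  rw [← Jfun_eq_Sfun_of_Kfun_eq_zero hKt]
  exact Jfun_scale_le hp hω.le hα hβ2 ht0.le ht1 φ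

end Functionals

/-- `l^{α,β}_ω = j^{α,β}_ω`. -/
theorem l_eq_j (p ω α β : ℝ) (hp : 5 < p) (hω : 0 < ω)
    (hα : 0 < α) (hβ1 : 0 ≤ 2*α - β) (hβ2 : 0 ≤ 2*α + β) :
    sInf {s : ℝ | ∃ φ : H1, φ.toFun ≠ 0 ∧ Kfun p ω 0 α β φ = 0 ∧ Sfun p ω 0 φ = s} =
      sInf {s : ℝ | ∃ φ : H1, φ.toFun ≠ 0 ∧ Kfun p ω 0 α β φ ≤ 0 ∧ Jfun p ω 0 α β φ = s} := by
  apply csInf_eq_csInf_of_forall_exists_le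
  · rintro _ ⟨φ, hφ, hK, rfl⟩
    exact ⟨_, ⟨φ, hφ, hK.le, Jfun_eq_Sfun_of_Kfun_eq_zero hK⟩, le_rfl⟩
  · rintro _ ⟨φ, hφ, hK, rfl⟩
    obtain ⟨ψ, hψ, hKψ, hSψ⟩ := exists_Kfun_eq_zero_Sfun_le_Jfun hp.le hω hα hβ1 hβ2 hφ hK
    exact ⟨_, ⟨ψ, hψ, hKψ, rfl⟩, hSψ⟩
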